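/- Let L be a residuated lattice and A a subuniverse of L such that ¬A := {¬x | x ∈ A} is also a subuniverse and ¬(x ⊗ y) = ¬x ⊕ ¬y holds for all x, y ∈ A. Then ((A,∨,⊗,0,1),(¬A,∧,⊕,1,0),¬) is a tied semiring. -/
import Mathlib


/-- A residuated lattice: a bounded lattice with least element `0` and greatest
element `1`, a commutative monoid structure `(⊗, 1)` (written `*`), and an
implication `himp` satisfying the adjointness property
`x ≤ y → z ↔ x ⊗ y ≤ z`. -/
class ResidLattice (L : Type*) extends Lattice L, CommMonoid L, Zero L where
  zero_le : ∀ x : L, 0 ≤ x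
  le_one : ∀ x : L, x ≤ 1
  himp : L → L → L
  adjoint : ∀ x y z : L, x ≤ himp y z ↔ x * y ≤ z

/-- Negation `¬x := x → 0`. -/
def rneg {L : Type*} [ResidLattice L] (x : L) : L := ResidLattice.himp x 0

/-- `x ⊕ y := ¬(¬x ⊗ ¬y)`. -/
def oplus {L : Type*} [ResidLattice L] (x y : L) : L := rneg (rneg x * rneg y)

/-- A subuniverse of a residuated lattice: a subset closed under all the
fundamental operations. -/
def IsSubuniverse {L : Type*} [ResidLattice L] (A : Set L) : Prop :=
  (0 : L) ∈ A ∧ (1 : L) ∈ A ∧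
  (∀ x ∈ A, ∀ y ∈ A, x ⊔ y ∈ A) ∧ (∀ x ∈ A, ∀ y ∈ A, x ⊓ y ∈ A) ∧
  (∀ x ∈ A, ∀ y ∈ A, x * y ∈ A) ∧ (∀ x ∈ A, ∀ y ∈ A, ResidLattice.himp x y ∈ A)

section RLaux
variable {L : Type*} [ResidLattice L]

lemma rl_adj (x y z : L) : x ≤ ResidLattice.himp y z ↔ x * y ≤ z :=
  ResidLattice.adjoint x y z

lemma rl_ext {x y : L} (h : ∀ c : L, c ≤ x ↔ c ≤ y) : x = y :=
  le_antisymm ((h x).1 le_rfl) ((h y).2 le_rfl)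

lemma rl_mul_le_mul_right {a b : L} (h : a ≤ b) (c : L) : a * c ≤ b * c := by
  have hb : b ≤ ResidLattice.himp c (b * c) := (rl_adj _ _ _).2 le_rfl
  exact (rl_adj _ _ _).1 (h.trans hb)

lemma rl_mul_zero (x : L) : x * 0 = 0 := by
  refine le_antisymm ?_ (ResidLattice.zero_le _)
  have := rl_mul_le_mul_right (ResidLattice.le_one x) 0
  simpa using this

lemma rl_mul_sup (x y z : L) : x * (y ⊔ z) = x * y ⊔ x * z := by
  refine le_antisymm ?_ ?_
  · rw [mul_comm]
    refine (rl_adj _ _ _).1 (sup_le ?_ ?_)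
    · exact (rl_adj _ _ _).2 (by rw [mul_comm]; exact le_sup_left)
    · exact (rl_adj _ _ _).2 (by rw [mul_comm]; exact le_sup_right)
  · refine sup_le ?_ ?_
    · rw [mul_comm x y, mul_comm x (y ⊔ z)]
      exact rl_mul_le_mul_right le_sup_left x
    · rw [mul_comm x z, mul_comm x (y ⊔ z)]
      exact rl_mul_le_mul_right le_sup_right x

lemma rl_le_rneg_iff (a b : L) : a ≤ rneg b ↔ a * b ≤ 0 := rl_adj a b 0

lemma rl_rneg_antitone {a b : L} (h : a ≤ b) : rneg b ≤ rneg a := by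
  rw [rl_le_rneg_iff]
  calc rneg b * a ≤ rneg b * b := by
        rw [mul_comm _ a, mul_comm _ b]; exact rl_mul_le_mul_right h _
    _ ≤ 0 := (rl_le_rneg_iff _ _).1 le_rfl

lemma rl_le_rneg_rneg (a : L) : a ≤ rneg (rneg a) := by
  rw [rl_le_rneg_iff, mul_comm]
  exact (rl_le_rneg_iff _ _).1 le_rfl

lemma rl_rneg_rneg_rneg (a : L) : rneg (rneg (rneg a)) = rneg a :=
  le_antisymm (rl_rneg_antitone (rl_le_rneg_rneg a)) (rl_le_rneg_rneg (rneg a))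

lemma rl_rneg_zero : rneg (0 : L) = 1 := by
  refine le_antisymm (ResidLattice.le_one _) ?_
  rw [rl_le_rneg_iff, one_mul]

lemma rl_rneg_one : rneg (1 : L) = 0 := by
  refine le_antisymm ?_ (ResidLattice.zero_le _)
  have : rneg (1 : L) * 1 ≤ 0 := (rl_le_rneg_iff _ _).1 le_rfl
  simpa using this

lemma rl_rneg_sup (x y : L) : rneg (x ⊔ y) = rneg x ⊓ rneg y := by
  refine rl_ext fun c => ?_
  rw [rl_le_rneg_iff, rl_mul_sup, sup_le_iff, le_inf_iff, rl_le_rneg_iff,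
    rl_le_rneg_iff]

lemma rl_rneg_mul (x y : L) : rneg (x * y) = ResidLattice.himp x (rneg y) := by
  refine rl_ext fun c => ?_
  rw [rl_le_rneg_iff, rl_adj, rl_le_rneg_iff, ← mul_assoc]

lemma rl_himp_inf (a b c : L) :
    ResidLattice.himp a (b ⊓ c) =
      ResidLattice.himp a b ⊓ ResidLattice.himp a c := by
  refine rl_ext fun d => ?_
  rw [le_inf_iff, rl_adj, rl_adj, rl_adj, le_inf_iff]

lemma rl_rneg_nn_mul (a b : L) : rneg (rneg (rneg a) * b) = rneg (a * b) := by
  rw [mul_comm, rl_rneg_mul, rl_rneg_rneg_rneg, ← rl_rneg_mul, mul_comm b a]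

lemma rl_rneg_mul_nn (a b : L) : rneg (a * rneg (rneg b)) = rneg (a * b) := by
  rw [mul_comm, rl_rneg_nn_mul, mul_comm]

lemma rl_rneg_eq_one_iff (z : L) : rneg z = 1 ↔ z ≤ 0 := by
  constructor
  · intro h
    have : (1 : L) ≤ rneg z := h.ge
    simpa using (rl_le_rneg_iff 1 z).1 this
  · intro h
    have hz : z = 0 := le_antisymm h (ResidLattice.zero_le z)
    rw [hz, rl_rneg_zero]

lemma rl_oplus_assoc (x y z : L) :
    oplus (oplus x y) z = oplus x (oplus y z) := by
  unfold oplus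
  rw [rl_rneg_nn_mul, rl_rneg_mul_nn, mul_assoc]

lemma rl_oplus_eq_himp (x w : L) (hw : rneg (rneg w) = w) :
    oplus x w = ResidLattice.himp (rneg x) w := by
  rw [oplus, rl_rneg_mul, hw]

end RLaux

/-- If `A` is a subuniverse of a residuated lattice such that `¬A` is also a
subuniverse and `¬(x ⊗ y) = ¬x ⊕ ¬y` for all `x, y ∈ A`, then
`((A,∨,⊗,0,1), (¬A,∧,⊕,1,0), ¬)` is a tied semiring. -/
theorem stmt18 {L : Type*} [ResidLattice L] (A : Set L)
    (hA : IsSubuniverse A) (hnA : IsSubuniverse (rneg '' A))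
    (hDM : ∀ x ∈ A, ∀ y ∈ A, rneg (x * y) = oplus (rneg x) (rneg y)) :
    -- `B := ¬A` is contained in `A`
    rneg '' A ⊆ A ∧
    -- `(A, ∨, ⊗, 0, 1)` is a commutative semiring (`A` is closed and the
    -- semiring laws hold)
    ((0 : L) ∈ A ∧ (1 : L) ∈ A ∧
      (∀ x ∈ A, ∀ y ∈ A, x ⊔ y ∈ A) ∧ (∀ x ∈ A, ∀ y ∈ A, x * y ∈ A) ∧
      (∀ x : L, x ⊔ 0 = x) ∧
      (∀ x y z : L, x * (y ⊔ z) = x * y ⊔ x * z) ∧ (∀ x : L, x * 0 = 0)) ∧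
    -- `(¬A, ∧, ⊕, 1, 0)` is a commutative semiring
    ((1 : L) ∈ rneg '' A ∧ (0 : L) ∈ rneg '' A ∧
      (∀ x ∈ rneg '' A, ∀ y ∈ rneg '' A, x ⊓ y ∈ rneg '' A) ∧
      (∀ x ∈ rneg '' A, ∀ y ∈ rneg '' A, oplus x y ∈ rneg '' A) ∧
      (∀ x ∈ rneg '' A, x ⊓ 1 = x) ∧
      (∀ x ∈ rneg '' A, oplus x 0 = x) ∧
      (∀ x ∈ rneg '' A, ∀ y ∈ rneg '' A, oplus x y = oplus y x) ∧
      (∀ x ∈ rneg '' A, ∀ y ∈ rneg '' A, ∀ z ∈ rneg '' A,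
        oplus (oplus x y) z = oplus x (oplus y z)) ∧
      (∀ x ∈ rneg '' A, ∀ y ∈ rneg '' A, ∀ z ∈ rneg '' A,
        oplus x (y ⊓ z) = oplus x y ⊓ oplus x z) ∧
      (∀ x ∈ rneg '' A, oplus x 1 = 1)) ∧
    -- `¬` is a homomorphism from `(A,∨,⊗,0,1)` onto `(¬A,∧,⊕,1,0)`
    ((∀ x ∈ A, rneg x ∈ rneg '' A) ∧ (∀ y ∈ rneg '' A, ∃ x ∈ A, rneg x = y) ∧
      (∀ x ∈ A, ∀ y ∈ A, rneg (x ⊔ y) = rneg x ⊓ rneg y) ∧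
      (∀ x ∈ A, ∀ y ∈ A, rneg (x * y) = oplus (rneg x) (rneg y)) ∧
      rneg (0 : L) = 1 ∧ rneg (1 : L) = 0) ∧
    -- `¬` restricted to `¬A` is a homomorphism from `(¬A,∧,⊕,1,0)` to
    -- `(A,∨,⊗,0,1)`
    ((∀ x ∈ rneg '' A, rneg x ∈ A) ∧
      (∀ x ∈ rneg '' A, ∀ y ∈ rneg '' A, rneg (x ⊓ y) = rneg x ⊔ rneg y) ∧
      (∀ x ∈ rneg '' A, ∀ y ∈ rneg '' A, rneg (oplus x y) = rneg x * rneg y)) ∧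
    -- `¬` is involutive on `¬A`
    (∀ x ∈ rneg '' A, rneg (rneg x) = x) ∧
    -- coupling condition on `¬A`
    (∀ x ∈ rneg '' A, ∀ y ∈ rneg '' A, (x ≤ y ↔ oplus (rneg x) y = 1)) := by
  obtain ⟨h0, h1, hsup, hinf, hmul, himp⟩ := hA
  -- regularity of elements of ¬A
  have hreg : ∀ x ∈ rneg '' A, rneg (rneg x) = x := by
    rintro _ ⟨a, _, rfl⟩
    exact rl_rneg_rneg_rneg a
  -- ¬A ⊆ A
  have hsub : rneg '' A ⊆ A := by
    rintro _ ⟨a, ha, rfl⟩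
    exact himp a ha 0 h0
  -- ¬ maps ¬A into ¬A
  have hnmem : ∀ x ∈ rneg '' A, rneg x ∈ rneg '' A := by
    intro x hx
    exact ⟨x, hsub hx, rfl⟩
  have h1n : (1 : L) ∈ rneg '' A := ⟨0, h0, rl_rneg_zero⟩
  have h0n : (0 : L) ∈ rneg '' A := ⟨1, h1, rl_rneg_one⟩
  refine ⟨hsub, ⟨h0, h1, hsup, hmul, fun x => sup_eq_left.2 (ResidLattice.zero_le x),
      rl_mul_sup, rl_mul_zero⟩, ?_, ?_, ?_, hreg, ?_⟩
  · -- ¬A semiring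
    refine ⟨h1n, h0n, hnA.2.2.2.1, ?_, ?_, ?_, ?_, ?_, ?_, ?_⟩
    · intro x hx y hy
      exact ⟨rneg x * rneg y, hmul _ (hsub (hnmem x hx)) _ (hsub (hnmem y hy)), rfl⟩
    · intro x _
      exact inf_eq_left.2 (ResidLattice.le_one x)
    · intro x hx
      rw [oplus, rl_rneg_zero, mul_one, hreg x hx]
    · intro x _ y _
      rw [oplus, oplus, mul_comm]
    · intro x _ y _ z _
      exact rl_oplus_assoc x y z
    · intro x _ y hy z hz
      have hinfmem : y ⊓ z ∈ rneg '' A := hnA.2.2.2.1 y hy z hz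
      rw [rl_oplus_eq_himp x (y ⊓ z) (hreg _ hinfmem),
        rl_oplus_eq_himp x y (hreg _ hy), rl_oplus_eq_himp x z (hreg _ hz),
        rl_himp_inf]
    · intro x _
      rw [oplus, rl_rneg_one, rl_mul_zero, rl_rneg_zero]
  · -- ¬ : A → ¬A homomorphism
    refine ⟨fun x hx => ⟨x, hx, rfl⟩, ?_, fun x _ y _ => rl_rneg_sup x y, hDM,
      rl_rneg_zero, rl_rneg_one⟩
    rintro _ ⟨a, ha, rfl⟩
    exact ⟨a, ha, rfl⟩
  · -- restricted homomorphism
    refine ⟨fun x hx => hsub (hnmem x hx), ?_, ?_⟩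
    · intro x hx y hy
      have hxy : x ⊓ y = rneg (rneg x ⊔ rneg y) := by
        rw [rl_rneg_sup, hreg x hx, hreg y hy]
      have hsupmem : rneg x ⊔ rneg y ∈ rneg '' A :=
        hnA.2.2.1 _ (hnmem x hx) _ (hnmem y hy)
      rw [hxy, hreg _ hsupmem]
    · intro x hx y hy
      have hmulmem : rneg x * rneg y ∈ rneg '' A :=
        hnA.2.2.2.2.1 _ (hnmem x hx) _ (hnmem y hy)
      rw [oplus, hreg _ hmulmem]
  · -- coupling
    intro x hx y hy
    rw [oplus, hreg x hx, rl_rneg_eq_one_iff, ← rl_le_rneg_iff, hreg y hy]
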